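/- Let D- be a canonical negative Boolean automaton double-cycle where the left cycle has odd size n ≥ 3 and the right cycle has size m = 1 (so c is its own right-cycle predecessor; f_c(x) = (¬x^ℓ_{n-1}) ∧ (¬x_c)). Then D- has exactly one irreversible configuration, namely ((10)^{(n-1)/2}1, 1), and the asynchronous transition graph has a unique attractor of size 2^n - 1. -/

import Mathlib

/-- One asynchronous update in a canonical negative double-cycle whose right
cycle has size 1: configurations are identified with the left cycle
`x ∈ {0,1}^n`, automaton 0 is the shared automaton `c` with
`f_c(x) = ¬x_{n-1} ∧ ¬x_0`, and every other automaton copies its predecessor. -/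
inductive Step1 (n : ℕ) : (Fin n → Bool) → (Fin n → Bool) → Prop
  | upd (x : Fin n → Bool) (i : Fin n) (hi : 1 ≤ i.val) :
      Step1 n x (Function.update x i (x ⟨i.val - 1, by have := i.isLt; omega⟩))
  | center (x : Fin n → Bool) (i : Fin n) (hi : i.val = 0) :
      Step1 n x (Function.update x i (!(x ⟨n - 1, by have := i.isLt; omega⟩) && !(x i)))

/-- `x` is irreversible: once any effective update is applied, `x` can never be
reached again. -/
def Irreversible (n : ℕ) (x : Fin n → Bool) : Prop :=
  ∀ x', Step1 n x x' → x' ≠ x → ¬ Relation.ReflTransGen (Step1 n) x' x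

/-- An attractor (terminal strongly connected component) of the asynchronous
transition graph: a nonempty set, closed under updates, whose configurations are
mutually reachable. -/
def IsAttractor1 (n : ℕ) (S : Set (Fin n → Bool)) : Prop :=
  S.Nonempty ∧ (∀ x ∈ S, ∀ y, Step1 n x y → y ∈ S) ∧
    ∀ x ∈ S, ∀ y ∈ S, Relation.ReflTransGen (Step1 n) x y

/-! The alternating configuration `1010…1` has no predecessor: a copy step creates two equal
neighbours, and an update of `c` reads `x_{n-1} = 1` and writes `0`. Every other configuration
is reachable from every configuration. Everything flows to `0…0` (flood the cycle with the value
of `c`, resetting `c` first if needed). From `0…0`, a target with `y_{n-1} = 0` is built from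
right to left, since `c` is then a free toggle. A target with `y_{n-1} = 1` and two equal
neighbours `y_j = y_{j+1}` is the image under the copy step at `j + 1` of a configuration whose
equal pair lies further right, or whose last bit is `0`. -/

open Function Relation

def alternating (n : ℕ) : Fin n → Bool := fun i => decide (i.val % 2 = 0)

namespace Step1

variable {m : ℕ}

theorem copy (x : Fin (m + 1) → Bool) (j : Fin m) :
    Step1 (m + 1) x (update x j.succ (x j.castSucc)) :=
  Step1.upd x j.succ (by simp)

theorem write (x : Fin (m + 1) → Bool) :
    Step1 (m + 1) x (update x 0 (!x (Fin.last m) && !x 0)) :=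
  Step1.center x 0 rfl

theorem of_eq_update {y : Fin (m + 1) → Bool} {j : Fin m} (h : y j.castSucc = y j.succ)
    (b : Bool) : Step1 (m + 1) (update y j.succ b) y := by
  simpa [update_of_ne (Fin.castSucc_lt_succ (i := j)).ne, h] using copy (update y j.succ b) j

theorem ne_alternating (hm : 0 < m) (hm2 : m % 2 = 0) {x y : Fin (m + 1) → Bool}
    (h : Step1 (m + 1) x y) : y ≠ alternating (m + 1) := by
  intro hy
  cases h with
  | upd i hi =>
    have h1 := congrFun hy i
    have h2 := congrFun hy ⟨i.val - 1, by omega⟩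
    simp [update_apply, Fin.ext_iff, alternating] at h1 h2
    rw [h1, decide_eq_decide] at h2
    omega
  | center i hi =>
    have h1 := congrFun hy i
    have h2 := congrFun hy ⟨m, by omega⟩
    simp [Fin.ext_iff, alternating, hi, hm.ne', hm2] at h1 h2
    simp [h2] at h1

end Step1

variable {m : ℕ}

theorem eq_alternating_of_reflTransGen (hm : 0 < m) (hm2 : m % 2 = 0)
    {x : Fin (m + 1) → Bool} (h : ReflTransGen (Step1 (m + 1)) x (alternating (m + 1))) :
    x = alternating (m + 1) := by
  induction h using ReflTransGen.head_induction_on with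
  | refl => rfl
  | head hstep _ ih => exact absurd ih (hstep.ne_alternating hm hm2)

theorem ite_le_zero_eq_self {α : Type*} (x : Fin (m + 1) → α) :
    (fun i => if i ≤ 0 then x 0 else x i) = x := by
  funext i
  split_ifs with h
  · rw [Fin.le_zero_iff.mp h]
  · rfl

theorem reflTransGen_flood (x : Fin (m + 1) → Bool) (k : Fin (m + 1)) :
    ReflTransGen (Step1 (m + 1)) x (fun i => if i ≤ k then x 0 else x i) := by
  induction k using Fin.induction with
  | zero => rw [ite_le_zero_eq_self]
  | succ j ih =>
    refine ih.tail ?_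
    convert Step1.copy _ j using 1
    funext i
    simp only [update_apply, le_refl, if_true]
    split_ifs <;> simp_all [Fin.le_def, Fin.ext_iff] <;> omega

theorem reflTransGen_update_zero (x : Fin (m + 1) → Bool) (hx : x (Fin.last m) = false)
    (b : Bool) : ReflTransGen (Step1 (m + 1)) x (update x 0 b) := by
  by_cases hb : b = x 0
  · rw [hb, update_eq_self]
  · convert ReflTransGen.single (Step1.write x)
    cases b <;> simp_all

theorem reflTransGen_const_false (x : Fin (m + 1) → Bool) :
    ReflTransGen (Step1 (m + 1)) x (fun _ => false) := by
  obtain ⟨x', hxx', hx'⟩ : ∃ x', ReflTransGen (Step1 (m + 1)) x x' ∧ x' 0 = false := by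
    cases h : x 0
    · exact ⟨x, .refl, h⟩
    · exact ⟨_, .single (Step1.write x), by simp [h]⟩
  simpa [Fin.le_last, hx'] using hxx'.trans (reflTransGen_flood x' (Fin.last m))

theorem reflTransGen_of_last_eq_false (y : Fin (m + 1) → Bool) (hy : y (Fin.last m) = false) :
    ReflTransGen (Step1 (m + 1)) (fun _ => false) y := by
  suffices h : ∀ k, ReflTransGen (Step1 (m + 1)) (fun _ => false)
      (fun i => if i ≤ k then y k else y i) by
    simpa only [ite_le_zero_eq_self] using h 0
  intro k
  induction k using Fin.reverseInduction with
  | last => simpa [Fin.le_last, hy] using ReflTransGen.refl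
  | cast j ih =>
    set z : Fin (m + 1) → Bool := fun i => if i ≤ j.succ then y j.succ else y i
    have hz : z (Fin.last m) = false := by
      simp only [z]
      split_ifs with h
      · rwa [Fin.last_le_iff.mp h]
      · exact hy
    refine (ih.trans (reflTransGen_update_zero z hz (y j.castSucc))).trans ?_
    convert reflTransGen_flood _ j.castSucc using 1
    funext i
    simp only [z, update_apply]
    split_ifs with h₁ h₂ h₃
    · rfl
    · exact absurd (h₂ ▸ Fin.zero_le _) h₁
    · rw [le_antisymm h₃ (Fin.castSucc_lt_iff_succ_le.mp (not_le.mp h₁))]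
    · rfl

theorem reflTransGen_of_adjacent_eq (y : Fin (m + 1) → Bool) (j : Fin m)
    (h : y j.castSucc = y j.succ) : ReflTransGen (Step1 (m + 1)) (fun _ => false) y := by
  by_cases hj : j.val + 1 < m
  · set j' : Fin m := ⟨j.val + 1, hj⟩
    have hj' : j'.castSucc = j.succ := Fin.ext rfl
    refine ReflTransGen.tail (reflTransGen_of_adjacent_eq _ j' ?_)
      (Step1.of_eq_update h (y j'.succ))
    simp [hj', update_of_ne (show j'.succ ≠ j.succ by simp [Fin.ext_iff, j'])]
  · have hj' : j.succ = Fin.last m := Fin.ext (by simp; omega)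
    refine ReflTransGen.tail ?_ (Step1.of_eq_update h false)
    rw [hj']
    exact reflTransGen_of_last_eq_false _ (update_self ..)
termination_by m - j.val

theorem eq_alternating_of_adjacent_ne (hm2 : m % 2 = 0) (y : Fin (m + 1) → Bool)
    (hlast : y (Fin.last m) = true) (h : ∀ j : Fin m, y j.castSucc ≠ y j.succ) :
    y = alternating (m + 1) := by
  have hy : ∀ i : Fin (m + 1), y i = if i.val % 2 = 0 then y 0 else !y 0 := by
    intro i
    induction i using Fin.induction with
    | zero => simp
    | succ j ih =>
      rw [Bool.eq_not.mpr (h j).symm, ih]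
      split_ifs <;> simp_all <;> omega
  have h0 : y 0 = true := by simpa [hm2] using (hy (Fin.last m)).symm.trans hlast
  funext i
  rw [hy i, h0]
  simp [alternating]

theorem reflTransGen_of_ne_alternating (hm2 : m % 2 = 0) (x : Fin (m + 1) → Bool)
    {y : Fin (m + 1) → Bool} (hy : y ≠ alternating (m + 1)) :
    ReflTransGen (Step1 (m + 1)) x y := by
  refine (reflTransGen_const_false x).trans ?_
  cases hlast : y (Fin.last m)
  · exact reflTransGen_of_last_eq_false y hlast
  by_cases h : ∃ j : Fin m, y j.castSucc = y j.succ
  · obtain ⟨j, hj⟩ := h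
    exact reflTransGen_of_adjacent_eq y j hj
  · exact absurd (eq_alternating_of_adjacent_ne hm2 y hlast fun j hj => h ⟨j, hj⟩) hy

theorem exists_step_ne (x : Fin (m + 1) → Bool) : ∃ x', Step1 (m + 1) x x' ∧ x' ≠ x := by
  by_cases h : ∀ j : Fin m, x j.castSucc = x j.succ
  · have hconst : ∀ i, x i = x 0 := fun i =>
      Fin.induction rfl (fun j ih => (h j).symm.trans ih) i
    refine ⟨_, Step1.write x, fun he => ?_⟩
    simpa [hconst (Fin.last m)] using congrFun he 0
  · obtain ⟨j, hj⟩ := not_forall.mp h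
    exact ⟨_, Step1.copy x j, fun he => hj (by simpa using congrFun he j.succ)⟩

theorem irreversible_iff (hm : 0 < m) (hm2 : m % 2 = 0) (x : Fin (m + 1) → Bool) :
    Irreversible (m + 1) x ↔ x = alternating (m + 1) := by
  refine ⟨fun hx => ?_, ?_⟩
  · by_contra hne
    obtain ⟨x', hstep, hx'⟩ := exists_step_ne x
    exact hx x' hstep hx' (reflTransGen_of_ne_alternating hm2 x' hne)
  · rintro rfl x' _ hx' hback
    exact hx' (eq_alternating_of_reflTransGen hm hm2 hback)

theorem mem_of_reflTransGen {α : Type*} {r : α → α → Prop} {S : Set α}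
    (hS : ∀ x ∈ S, ∀ y, r x y → y ∈ S) {a b : α} (ha : a ∈ S) (h : ReflTransGen r a b) :
    b ∈ S := by
  induction h with
  | refl => exact ha
  | tail _ hbc ih => exact hS _ ih _ hbc

theorem isAttractor1_compl_alternating (hm : 0 < m) (hm2 : m % 2 = 0) :
    IsAttractor1 (m + 1) {alternating (m + 1)}ᶜ := by
  refine ⟨⟨fun _ => false, fun h => ?_⟩, fun x _ y hxy => hxy.ne_alternating hm hm2,
    fun x _ y hy => reflTransGen_of_ne_alternating hm2 x hy⟩
  simpa [alternating] using congrFun h 0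

theorem IsAttractor1.eq_compl_alternating (hm : 0 < m) (hm2 : m % 2 = 0)
    {T : Set (Fin (m + 1) → Bool)} (hT : IsAttractor1 (m + 1) T) :
    T = {alternating (m + 1)}ᶜ := by
  obtain ⟨⟨t, ht⟩, hclosed, hconn⟩ := hT
  have halt : alternating (m + 1) ∉ T := fun h =>
    (Step1.write _).ne_alternating hm hm2 <| eq_alternating_of_reflTransGen hm hm2 <|
      hconn _ (hclosed _ h _ (Step1.write _)) _ h
  ext y
  refine ⟨fun hy hya => halt (hya ▸ hy), fun hy => ?_⟩
  exact mem_of_reflTransGen hclosed ht (reflTransGen_of_ne_alternating hm2 t hy)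

/-- For a canonical negative double-cycle with odd left-cycle size n ≥ 3 and
right cycle of size 1: the unique irreversible configuration is
((10)^{(n-1)/2}1, 1), and there is a unique attractor, of size 2^n - 1. -/
theorem stmt17 (n : ℕ) (hn : 3 ≤ n) (hodd : n % 2 = 1) :
    (∀ x : Fin n → Bool,
      Irreversible n x ↔ x = fun i : Fin n => decide (i.val % 2 = 0)) ∧
    ∃ S : Set (Fin n → Bool), IsAttractor1 n S ∧ S.ncard = 2 ^ n - 1 ∧
      ∀ T : Set (Fin n → Bool), IsAttractor1 n T → T = S := by
  obtain ⟨m, rfl⟩ : ∃ m, n = m + 1 := ⟨n - 1, by omega⟩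
  have hm : 0 < m := by omega
  have hm2 : m % 2 = 0 := by omega
  refine ⟨irreversible_iff hm hm2, {alternating (m + 1)}ᶜ,
    isAttractor1_compl_alternating hm hm2, ?_, fun T hT => hT.eq_compl_alternating hm hm2⟩
  rw [Set.ncard_compl, Set.ncard_singleton, Nat.card_fun]
  simp
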